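/- arXiv:1110.2209 — 2 statements merged into one kernel-verified Lean document; each statement's English description precedes it below -/
import Mathlib

section
/- Martello-Toth dominance swap lemma: Suppose a bin packing solution assigns item set B to bin m and is feasible (every bin's total weight ≤ c). Let A be a feasible set of items (sum ≤ c), each currently assigned to some other bin, and suppose B can be partitioned into subsets B₁,…,B_i with an injection mapping each B_k to a distinct element a_k ∈ A such that the sum of weights in B_k is ≤ w(a_k). Then the solution obtained by assigning A to bin m and placing each B_k in the bin that originally contained a_k is also feasible and uses the same number of bins. -/
/-- Martello-Toth dominance swap lemma for bin packing: swapping `A` into bin `m` (in place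
of `B = bins m`) and each fiber `B_k` into the bin that contained `a_k` yields a feasible
solution that is again a partition into the same number `n` of bins. -/
theorem stmt_2 {α : Type*} [DecidableEq α] (w : α → ℕ) (c : ℕ) (n : ℕ)
    (S : Finset α) (bins : Fin n → Finset α)
    (hdisj : ∀ i j, i ≠ j → Disjoint (bins i) (bins j))
    (hcover : ∀ x ∈ S, ∃ i, x ∈ bins i) (hsub : ∀ i, bins i ⊆ S)
    (hfeas : ∀ i, ∑ x ∈ bins i, w x ≤ c)
    (m : Fin n) (A : Finset α) (hAS : A ⊆ S)
    (hAother : ∀ a ∈ A, a ∉ bins m)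
    (hAfeas : ∑ a ∈ A, w a ≤ c)
    (σ : α → α) (hσmaps : ∀ b ∈ bins m, σ b ∈ A)
    (hσdom : ∀ a ∈ A, ∑ b ∈ (bins m).filter (fun b => σ b = a), w b ≤ w a) :
    let bins' : Fin n → Finset α := fun i =>
      if i = m then A
      else ((bins i \ A) ∪ (bins m).filter (fun b => σ b ∈ bins i))
    (∀ i, ∑ x ∈ bins' i, w x ≤ c) ∧
      (∀ i j, i ≠ j → Disjoint (bins' i) (bins' j)) ∧
      (∀ x ∈ S, ∃ i, x ∈ bins' i) ∧ (∀ i, bins' i ⊆ S) := by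
  intro bins'
  have hAm : Disjoint A (bins m) := Finset.disjoint_left.mpr hAother
  refine ⟨?_, ?_, ?_, ?_⟩
  · intro i
    by_cases hi : i = m
    · simp only [bins', hi, if_pos rfl]; exact hAfeas
    · simp only [bins', if_neg hi]
      have hdm : Disjoint (bins i \ A) ((bins m).filter (fun b => σ b ∈ bins i)) := by
        refine Finset.disjoint_left.mpr fun x hx hx' => ?_
        exact (Finset.disjoint_left.mp (hdisj i m hi)) (Finset.mem_sdiff.mp hx).1
          (Finset.mem_filter.mp hx').1
      rw [Finset.sum_union hdm]
      have hkey : (bins m).filter (fun b => σ b ∈ bins i)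
          = (A ∩ bins i).biUnion (fun a => (bins m).filter (fun b => σ b = a)) := by
        ext b
        simp only [Finset.mem_filter, Finset.mem_biUnion, Finset.mem_inter]
        constructor
        · rintro ⟨hb, hbi⟩
          exact ⟨σ b, ⟨hσmaps b hb, hbi⟩, hb, rfl⟩
        · rintro ⟨a, ⟨_, hai⟩, hb, rfl⟩
          exact ⟨hb, hai⟩
      have hdisjfib : ∀ a ∈ (A ∩ bins i), ∀ a' ∈ (A ∩ bins i), a ≠ a' →
          Disjoint ((bins m).filter (fun b => σ b = a))
            ((bins m).filter (fun b => σ b = a')) := by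
        intro a _ a' _ haa'
        refine Finset.disjoint_left.mpr fun x hx hx' => ?_
        exact haa' ((Finset.mem_filter.mp hx).2.symm.trans (Finset.mem_filter.mp hx').2)
      have h2 : ∑ b ∈ (bins m).filter (fun b => σ b ∈ bins i), w b
          ≤ ∑ a ∈ A ∩ bins i, w a := by
        rw [hkey, Finset.sum_biUnion hdisjfib]
        exact Finset.sum_le_sum fun a ha => hσdom a (Finset.mem_inter.mp ha).1
      have h3 : ∑ x ∈ bins i \ A, w x + ∑ a ∈ A ∩ bins i, w a = ∑ x ∈ bins i, w x := by
        rw [← Finset.sdiff_inter_self_left (bins i) A, Finset.inter_comm A (bins i)]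
        exact Finset.sum_sdiff (Finset.inter_subset_left)
      calc ∑ x ∈ bins i \ A, w x + ∑ b ∈ (bins m).filter (fun b => σ b ∈ bins i), w b
          ≤ ∑ x ∈ bins i \ A, w x + ∑ a ∈ A ∩ bins i, w a := by omega
        _ = ∑ x ∈ bins i, w x := h3
        _ ≤ c := hfeas i
  · intro i j hij
    refine Finset.disjoint_left.mpr fun x hx hx' => ?_
    by_cases hi : i = m <;> by_cases hj : j = m
    · exact hij (hi.trans hj.symm)
    · simp only [bins', if_pos hi, if_neg hj, Finset.mem_union, Finset.mem_sdiff,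
        Finset.mem_filter] at hx hx'
      rcases hx' with h | h
      · exact h.2 hx
      · exact hAother x hx h.1
    · simp only [bins', if_neg hi, if_pos hj, Finset.mem_union, Finset.mem_sdiff,
        Finset.mem_filter] at hx hx'
      rcases hx with h | h
      · exact h.2 hx'
      · exact hAother x hx' h.1
    · simp only [bins', if_neg hi, if_neg hj, Finset.mem_union, Finset.mem_sdiff,
        Finset.mem_filter] at hx hx'
      rcases hx with h | h <;> rcases hx' with h' | h'
      · exact Finset.disjoint_left.mp (hdisj i j hij) h.1 h'.1
      · exact Finset.disjoint_left.mp (hdisj i m hi) h.1 h'.1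
      · exact Finset.disjoint_left.mp (hdisj j m hj) h'.1 h.1
      · exact Finset.disjoint_left.mp (hdisj i j hij) h.2 h'.2
  · intro x hx
    by_cases hxA : x ∈ A
    · exact ⟨m, by simp [bins', hxA]⟩
    · obtain ⟨i, hi⟩ := hcover x hx
      by_cases him : i = m
      · have hσx : σ x ∈ A := hσmaps x (him ▸ hi)
        obtain ⟨j, hj⟩ := hcover (σ x) (hAS hσx)
        have hjm : j ≠ m := fun h => hAother (σ x) hσx (h ▸ hj)
        refine ⟨j, ?_⟩
        simp only [bins', if_neg hjm, Finset.mem_union, Finset.mem_filter]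
        exact Or.inr ⟨him ▸ hi, hj⟩
      · refine ⟨i, ?_⟩
        simp only [bins', if_neg him, Finset.mem_union, Finset.mem_sdiff]
        exact Or.inl ⟨hi, hxA⟩
  · intro i x hx
    by_cases hi : i = m
    · simp only [bins', if_pos hi] at hx; exact hAS hx
    · simp only [bins', if_neg hi, Finset.mem_union, Finset.mem_sdiff,
        Finset.mem_filter] at hx
      rcases hx with h | h
      · exact hsub i h.1
      · exact hsub m h.1
end

section
/- Bin covering dominance swap lemma: Suppose a bin covering solution assigns item set B to bin m and every covered bin's total weight is at least the quota q. Let A be a feasible set (sum of weights ≥ q) whose items lie in other bins, and suppose B can be partitioned into subsets B₁,…,B_i with an injection mapping each a_k ∈ A to a distinct subset B_k such that w(a_k) ≤ Σ_{b ∈ B_k} w(b). Then swapping A into bin m and each B_k into the bin that contained a_k yields a solution in which every previously covered bin is still covered, and the number of covered bins does not decrease. -/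
open Finset

section SwapLemma

variable {α M : Type*} [DecidableEq α] [AddCommMonoid M] [PartialOrder M] [IsOrderedAddMonoid M]
  [CanonicallyOrderedAdd M]

/-- The fibers of `τ` over `P ∩ A` are disjoint pieces of `{b ∈ B | τ b ∈ P}`, each outweighing
its base point, so trading `P ∩ A` for them cannot lower the load of `P`. -/
theorem sum_le_sum_sdiff_union_filter (w : α → M) {P A B : Finset α} {τ : α → α}
    (hPB : Disjoint P B) (hdom : ∀ a ∈ A, w a ≤ ∑ b ∈ B with τ b = a, w b) :
    ∑ x ∈ P, w x ≤ ∑ x ∈ P \ A ∪ {b ∈ B | τ b ∈ P}, w x := by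
  have hfibers : ∑ a ∈ P ∩ A, w a ≤ ∑ b ∈ B with τ b ∈ P, w b :=
    calc ∑ a ∈ P ∩ A, w a ≤ ∑ a ∈ P ∩ A, ∑ b ∈ B with τ b = a, w b :=
          sum_le_sum fun a ha => hdom a (mem_inter.1 ha).2
      _ = ∑ b ∈ B with τ b ∈ P ∩ A, w b := sum_fiberwise_eq_sum_filter _ _ _ _
      _ ≤ ∑ b ∈ B with τ b ∈ P, w b :=
          sum_le_sum_of_subset (monotone_filter_right _ fun _ _ hb => (mem_inter.1 hb).1)
  rw [sum_union (hPB.mono sdiff_subset (filter_subset _ _)), ← sum_inter_add_sum_sdiff P A,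
    add_comm (∑ x ∈ P \ A, w x)]
  exact add_le_add_left hfibers _

end SwapLemma

theorem stmt_4_general {α : Type*} [DecidableEq α] (w : α → ℕ) (q : ℕ) (n : ℕ)
    (bins : Fin n → Finset α) (hdisj : ∀ i j, i ≠ j → Disjoint (bins i) (bins j))
    (m : Fin n) (A : Finset α) (hAfeas : q ≤ ∑ a ∈ A, w a) (τ : α → α)
    (hτdom : ∀ a ∈ A, w a ≤ ∑ b ∈ (bins m).filter (fun b => τ b = a), w b) :
    let bins' : Fin n → Finset α := fun i =>
      if i = m then A
      else ((bins i \ A) ∪ (bins m).filter (fun b => τ b ∈ bins i))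
    (∀ i, q ≤ ∑ x ∈ bins i, w x → q ≤ ∑ x ∈ bins' i, w x) ∧
      (Finset.univ.filter (fun i => q ≤ ∑ x ∈ bins i, w x)).card ≤
        (Finset.univ.filter (fun i => q ≤ ∑ x ∈ bins' i, w x)).card := by
  intro bins'
  have hstill_covered : ∀ i, q ≤ ∑ x ∈ bins i, w x → q ≤ ∑ x ∈ bins' i, w x := by
    intro i hi
    by_cases him : i = m
    · simpa [bins', him] using hAfeas
    · simpa only [bins', if_neg him] using
        hi.trans (sum_le_sum_sdiff_union_filter w (hdisj i m him) hτdom)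
  exact ⟨hstill_covered, card_le_card (monotone_filter_right _ fun i _ => hstill_covered i)⟩

/-- Bin covering dominance swap lemma: swapping `A` into bin `m` (in place of `B = bins m`)
and each fiber `B_k` into the bin that contained `a_k` keeps every previously covered bin
covered, and the number of covered bins does not decrease. -/
theorem stmt_4 {α : Type*} [DecidableEq α] (w : α → ℕ) (q : ℕ) (n : ℕ)
    (S : Finset α) (bins : Fin n → Finset α)
    (hdisj : ∀ i j, i ≠ j → Disjoint (bins i) (bins j))
    (hcover : ∀ x ∈ S, ∃ i, x ∈ bins i) (hsub : ∀ i, bins i ⊆ S)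
    (m : Fin n) (hBcov : q ≤ ∑ x ∈ bins m, w x)
    (A : Finset α) (hAS : A ⊆ S)
    (hAother : ∀ a ∈ A, a ∉ bins m)
    (hAfeas : q ≤ ∑ a ∈ A, w a)
    (τ : α → α) (hτmaps : ∀ b ∈ bins m, τ b ∈ A)
    (hτdom : ∀ a ∈ A, w a ≤ ∑ b ∈ (bins m).filter (fun b => τ b = a), w b) :
    let bins' : Fin n → Finset α := fun i =>
      if i = m then A
      else ((bins i \ A) ∪ (bins m).filter (fun b => τ b ∈ bins i))
    (∀ i, q ≤ ∑ x ∈ bins i, w x → q ≤ ∑ x ∈ bins' i, w x) ∧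
      (Finset.univ.filter (fun i => q ≤ ∑ x ∈ bins i, w x)).card ≤
        (Finset.univ.filter (fun i => q ≤ ∑ x ∈ bins' i, w x)).card :=
  stmt_4_general w q n bins hdisj m A hAfeas τ hτdom
end
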